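/- Let n ≥ 2 and let ∇ = ∇⁰ + Γ be a symplectic connection on (ℝ^{2n},Ω) (not assumed of Ricci type), with curvature R and Ricci tensor r. Suppose there exists a smooth 1-form u : ℝ^{2n} → V* such that (∇_X r)(x)(Y,Z) = (1/(2n+1))·(Ω(X,Y)u(x)(Z) + Ω(X,Z)u(x)(Y)) for all x,X,Y,Z. Then the 'Weyl' part W = R − E of the curvature satisfies the cyclic identity: for all x and all X,Y,Z,T,S ∈ V, (∇_X W)(x)(Y,Z;T,S) + (∇_Y W)(x)(Z,X;T,S) + (∇_Z W)(x)(X,Y;T,S) = 0. -/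

import Mathlib

noncomputable section

/-- The standard symplectic form on `ℝ^{2n}`. -/
def Omega (n : ℕ) (x y : Fin (2*n) → ℝ) : ℝ :=
  ∑ i : Fin n, (x ⟨i.1, by have := i.isLt; omega⟩ * y ⟨n + i.1, by have := i.isLt; omega⟩
    - x ⟨n + i.1, by have := i.isLt; omega⟩ * y ⟨i.1, by have := i.isLt; omega⟩)

/-- The curvature of `∇ = ∇⁰ + Γ`. -/
def curv (n : ℕ) (Γ : (Fin (2*n) → ℝ) → (Fin (2*n) → ℝ) →L[ℝ] (Fin (2*n) → ℝ) →L[ℝ] (Fin (2*n) → ℝ))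
    (x X Y : Fin (2*n) → ℝ) : (Fin (2*n) → ℝ) →L[ℝ] (Fin (2*n) → ℝ) :=
  fderiv ℝ Γ x X Y - fderiv ℝ Γ x Y X + (Γ x X).comp (Γ x Y) - (Γ x Y).comp (Γ x X)

/-- The Ricci tensor `r(x)(X,Y) = Tr(Z ↦ R(x)(X,Z)Y)`. -/
def ricci (n : ℕ) (Γ : (Fin (2*n) → ℝ) → (Fin (2*n) → ℝ) →L[ℝ] (Fin (2*n) → ℝ) →L[ℝ] (Fin (2*n) → ℝ))
    (x X Y : Fin (2*n) → ℝ) : ℝ :=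
  ∑ a : Fin (2*n), curv n Γ x X (Pi.single a 1) Y a

/-- The covariant derivative of the Ricci tensor. -/
def nablaRicci (n : ℕ)
    (Γ : (Fin (2*n) → ℝ) → (Fin (2*n) → ℝ) →L[ℝ] (Fin (2*n) → ℝ) →L[ℝ] (Fin (2*n) → ℝ))
    (x X Y Z : Fin (2*n) → ℝ) : ℝ :=
  fderiv ℝ (fun p => ricci n Γ p Y Z) x X - ricci n Γ x (Γ x X Y) Z - ricci n Γ x Y (Γ x X Z)

/-- The Ricci part `E` of the curvature tensor. -/
def Epart (n : ℕ)
    (Γ : (Fin (2*n) → ℝ) → (Fin (2*n) → ℝ) →L[ℝ] (Fin (2*n) → ℝ) →L[ℝ] (Fin (2*n) → ℝ))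
    (x X Y Z T : Fin (2*n) → ℝ) : ℝ :=
  -(1/(2*((n:ℝ)+1))) * (2 * Omega n X Y * ricci n Γ x Z T
    + Omega n X Z * ricci n Γ x Y T + Omega n X T * ricci n Γ x Y Z
    - Omega n Y Z * ricci n Γ x X T - Omega n Y T * ricci n Γ x X Z)

/-- The 'Weyl' part `W = R − E` of the curvature tensor. -/
def Wpart (n : ℕ)
    (Γ : (Fin (2*n) → ℝ) → (Fin (2*n) → ℝ) →L[ℝ] (Fin (2*n) → ℝ) →L[ℝ] (Fin (2*n) → ℝ))
    (x X Y Z T : Fin (2*n) → ℝ) : ℝ :=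
  Omega n (curv n Γ x X Y Z) T - Epart n Γ x X Y Z T

/-- The covariant derivative of the 4-tensor `W`:
`(∇_X W)(x)(Y,Z;T,S) = D_X(W(·)(Y,Z;T,S))(x) − W(x)(Γ(x)(X)Y,Z;T,S) − W(x)(Y,Γ(x)(X)Z;T,S)
− W(x)(Y,Z;Γ(x)(X)T,S) − W(x)(Y,Z;T,Γ(x)(X)S)`. -/
def nablaW (n : ℕ)
    (Γ : (Fin (2*n) → ℝ) → (Fin (2*n) → ℝ) →L[ℝ] (Fin (2*n) → ℝ) →L[ℝ] (Fin (2*n) → ℝ))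
    (x X Y Z T S : Fin (2*n) → ℝ) : ℝ :=
  fderiv ℝ (fun p => Wpart n Γ p Y Z T S) x X
    - Wpart n Γ x (Γ x X Y) Z T S - Wpart n Γ x Y (Γ x X Z) T S
    - Wpart n Γ x Y Z (Γ x X T) S - Wpart n Γ x Y Z T (Γ x X S)

/-!
Covariantly differentiating `W = R − E` gives `∇W = ∇R − E(∇r)`, where `E(ρ)` is `E` with the
Ricci tensor replaced by `ρ`: the map `ρ ↦ E(ρ)` is built from `Ω` alone and `∇Ω = 0`.
The cyclic sum of `∇R` vanishes by the second Bianchi identity of the torsion-free connection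
`∇`, and for `∇r` of the prescribed form in `u` the cyclic sum of `E(∇r)` cancels identically,
using only the antisymmetry of `Ω`.
-/

open ContinuousLinearMap

section Calculus

variable {𝕜 : Type*} [NontriviallyNormedField 𝕜] {E V W : Type*}
  [NormedAddCommGroup E] [NormedSpace 𝕜 E] [NormedAddCommGroup V] [NormedSpace 𝕜 V]
  [NormedAddCommGroup W] [NormedSpace 𝕜 W] {x : E}

theorem differentiable_fderiv_of_contDiff_two {f : E → W} (hf : ContDiff 𝕜 2 f) :
    Differentiable 𝕜 (fderiv 𝕜 f) :=
  (hf.fderiv_right (m := 1) le_rfl).differentiable one_ne_zero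

theorem fderiv_clm_apply_apply {F : E → V →L[𝕜] W} {g : E → V} (hF : DifferentiableAt 𝕜 F x)
    (hg : DifferentiableAt 𝕜 g x) (X : E) :
    fderiv 𝕜 (fun p => F p (g p)) x X = F x (fderiv 𝕜 g x X) + fderiv 𝕜 F x X (g x) := by
  simp [fderiv_clm_apply hF hg]

end Calculus

section Curvature

variable {E : Type*} [NormedAddCommGroup E] [NormedSpace ℝ E] {Γ : E → E →L[ℝ] E →L[ℝ] E}
  (x X Y Z T : E)

def curvature (Γ : E → E →L[ℝ] E →L[ℝ] E) (x X Y : E) : E →L[ℝ] E :=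
  fderiv ℝ Γ x X Y - fderiv ℝ Γ x Y X + (Γ x X).comp (Γ x Y) - (Γ x Y).comp (Γ x X)

def nablaCurvature (Γ : E → E →L[ℝ] E →L[ℝ] E) (x X Y Z T : E) : E :=
  fderiv ℝ (fun p => curvature Γ p Y Z T) x X - curvature Γ x (Γ x X Y) Z T
    - curvature Γ x Y (Γ x X Z) T - curvature Γ x Y Z (Γ x X T) + Γ x X (curvature Γ x Y Z T)

theorem curvature_apply : curvature Γ x Y Z T =
    fderiv ℝ Γ x Y Z T - fderiv ℝ Γ x Z Y T + Γ x Y (Γ x Z T) - Γ x Z (Γ x Y T) := by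
  simp [curvature]

theorem differentiable_curvature_apply (hΓ : ContDiff ℝ 2 Γ) :
    Differentiable ℝ (fun p => curvature Γ p Y Z T) := by
  have := hΓ.differentiable two_ne_zero
  have := differentiable_fderiv_of_contDiff_two hΓ
  simp only [curvature_apply]
  fun_prop

theorem fderiv_curvature_apply (hΓ : ContDiff ℝ 2 Γ) :
    fderiv ℝ (fun p => curvature Γ p Y Z T) x X =
      fderiv ℝ (fderiv ℝ Γ) x X Y Z T - fderiv ℝ (fderiv ℝ Γ) x X Z Y T
      + fderiv ℝ Γ x X Y (Γ x Z T) + Γ x Y (fderiv ℝ Γ x X Z T)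
      - fderiv ℝ Γ x X Z (Γ x Y T) - Γ x Z (fderiv ℝ Γ x X Y T) := by
  have := hΓ.differentiable two_ne_zero
  have := differentiable_fderiv_of_contDiff_two hΓ
  simp only [curvature_apply]
  rw [fderiv_fun_sub (by fun_prop) (by fun_prop), fderiv_fun_add (by fun_prop) (by fun_prop),
    fderiv_fun_sub (by fun_prop) (by fun_prop)]
  simp (disch := fun_prop) only [sub_apply, add_apply, fderiv_clm_apply_apply, fderiv_const_apply,
    zero_apply, map_zero, zero_add]
  abel

theorem nablaCurvature_cyclic (hΓ : ContDiff ℝ 2 Γ) (hΓsymm : ∀ x A B, Γ x A B = Γ x B A) :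
    nablaCurvature Γ x X Y Z T + nablaCurvature Γ x Y Z X T + nablaCurvature Γ x Z X Y T = 0 := by
  have hD2 := hΓ.contDiffAt.isSymmSndFDerivAt (x := x) (by simp)
  simp only [nablaCurvature, fderiv_curvature_apply (hΓ := hΓ)]
  simp only [curvature_apply, map_add, map_sub]
  rw [hΓsymm x Y X, hΓsymm x Z Y, hΓsymm x Z X, hD2 Y X, hD2 Z Y, hD2 Z X]
  abel

end Curvature

section Symplectic

variable {n : ℕ}

theorem Omega_antisymm (x y : Fin (2*n) → ℝ) : Omega n x y = -Omega n y x := by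
  simp only [Omega, ← Finset.sum_neg_distrib]
  exact Finset.sum_congr rfl fun i _ => by ring

def omegaCLM (n : ℕ) (y : Fin (2*n) → ℝ) : (Fin (2*n) → ℝ) →L[ℝ] ℝ :=
  LinearMap.toContinuousLinearMap
    { toFun := fun x => Omega n x y
      map_add' := fun a b => by
        simp only [Omega, Pi.add_apply, ← Finset.sum_add_distrib]
        exact Finset.sum_congr rfl fun i _ => by ring
      map_smul' := fun c a => by
        simp only [Omega, Pi.smul_apply, smul_eq_mul, RingHom.id_apply, Finset.mul_sum]
        exact Finset.sum_congr rfl fun i _ => by ring }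

theorem Omega_add_left (a b y : Fin (2*n) → ℝ) : Omega n (a + b) y = Omega n a y + Omega n b y :=
  map_add (omegaCLM n y) a b

theorem Omega_sub_left (a b y : Fin (2*n) → ℝ) : Omega n (a - b) y = Omega n a y - Omega n b y :=
  map_sub (omegaCLM n y) a b

theorem Omega_zero_left (y : Fin (2*n) → ℝ) : Omega n 0 y = 0 :=
  map_zero (omegaCLM n y)

theorem Omega_single_upper (v : Fin (2*n) → ℝ) (j : Fin n) :
    Omega n v (Pi.single ⟨n + j, by omega⟩ 1) = v ⟨j, by omega⟩ := by
  have hne : ∀ i : Fin n, (i : ℕ) ≠ n + j := fun i => by omega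
  simp [Omega, Pi.single_apply, Fin.val_inj, hne]

theorem Omega_single_lower (v : Fin (2*n) → ℝ) (j : Fin n) :
    Omega n v (Pi.single ⟨j, by omega⟩ 1) = -v ⟨n + j, by omega⟩ := by
  have hne : ∀ i : Fin n, n + (i : ℕ) ≠ j := fun i => by omega
  simp [Omega, Pi.single_apply, Fin.val_inj, hne]

theorem eq_zero_of_forall_Omega_eq_zero {v : Fin (2*n) → ℝ} (h : ∀ w, Omega n v w = 0) :
    v = 0 := by
  funext j
  by_cases hj : (j : ℕ) < n
  · simpa [Omega_single_upper v ⟨j, hj⟩] using h (Pi.single ⟨n + j, by omega⟩ 1)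
  · have := Omega_single_lower v ⟨j - n, by omega⟩
    simp only [show n + (j - n) = (j : ℕ) by omega, h, zero_eq_neg] at this
    simpa using this

variable {Γ : (Fin (2*n) → ℝ) → (Fin (2*n) → ℝ) →L[ℝ] (Fin (2*n) → ℝ) →L[ℝ] (Fin (2*n) → ℝ)}
  (x X Y Z T S : Fin (2*n) → ℝ)

theorem Gamma_comm_of_Omega (hsym : ∀ x X Y Z, Omega n (Γ x X Y) Z = Omega n (Γ x Y X) Z) :
    Γ x X Y = Γ x Y X :=
  sub_eq_zero.mp <| eq_zero_of_forall_Omega_eq_zero fun w => by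
    rw [Omega_sub_left, hsym, sub_self]

theorem curv_eq_curvature : curv n Γ = curvature Γ := rfl

theorem differentiable_ricci (hΓ : ContDiff ℝ 2 Γ) :
    Differentiable ℝ (fun p => ricci n Γ p Y Z) := by
  have := fun a : Fin (2*n) => differentiable_curvature_apply Y (Pi.single a 1) Z hΓ
  simp only [ricci, curv_eq_curvature]
  fun_prop

@[fun_prop] theorem differentiable_Omega_left : Differentiable ℝ (fun v => Omega n v S) :=
  (omegaCLM n S).differentiable

theorem fderiv_Omega_left {f : (Fin (2*n) → ℝ) → Fin (2*n) → ℝ} (hf : DifferentiableAt ℝ f x) :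
    fderiv ℝ (fun p => Omega n (f p) S) x X = Omega n (fderiv ℝ f x X) S :=
  congrArg (· X) ((omegaCLM n S).hasFDerivAt.comp x hf.hasFDerivAt).fderiv

def epartOf (n : ℕ) (ρ : (Fin (2*n) → ℝ) → (Fin (2*n) → ℝ) → ℝ) (X Y Z T : Fin (2*n) → ℝ) : ℝ :=
  -(1/(2*((n:ℝ)+1))) * (2 * Omega n X Y * ρ Z T + Omega n X Z * ρ Y T + Omega n X T * ρ Y Z
    - Omega n Y Z * ρ X T - Omega n Y T * ρ X Z)

theorem Epart_eq_epartOf : Epart n Γ x = epartOf n (ricci n Γ x) := rfl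

theorem fderiv_Wpart (hΓ : ContDiff ℝ 2 Γ) :
    fderiv ℝ (fun p => Wpart n Γ p Y Z T S) x X =
      Omega n (fderiv ℝ (fun p => curvature Γ p Y Z T) x X) S
        - epartOf n (fun A B => fderiv ℝ (fun p => ricci n Γ p A B) x X) Y Z T S := by
  have hR := differentiable_curvature_apply Y Z T hΓ
  have hr := fun A B => differentiable_ricci A B hΓ
  simp only [Wpart, Epart_eq_epartOf, epartOf, curv_eq_curvature]
  simp (disch := fun_prop) only [fderiv_fun_sub, fderiv_fun_add, fderiv_const_mul]
  simp only [sub_apply, add_apply, smul_apply, smul_eq_mul, fderiv_Omega_left x X S (hR x)]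

theorem nablaW_eq (hΓ : ContDiff ℝ 2 Γ)
    (hsym : ∀ x X Y Z, Omega n (Γ x X Y) Z = Omega n (Γ x X Z) Y) :
    nablaW n Γ x X Y Z T S =
      Omega n (nablaCurvature Γ x X Y Z T) S - epartOf n (nablaRicci n Γ x X) Y Z T S := by
  -- `Γ x X` lies in the symplectic Lie algebra, i.e. `∇Ω = 0`.
  have hΓΩ : ∀ A B, Omega n A (Γ x X B) = -Omega n (Γ x X A) B := fun A B => by
    rw [Omega_antisymm, hsym]
  rw [nablaW, fderiv_Wpart x X Y Z T S hΓ]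
  simp only [Wpart, Epart_eq_epartOf, epartOf,
    nablaCurvature, nablaRicci, curv_eq_curvature, Omega_add_left, Omega_sub_left, hΓΩ]
  ring

theorem epartOf_cyclic_eq_zero (c : ℝ) (u : (Fin (2*n) → ℝ) → ℝ)
    (ρ : (Fin (2*n) → ℝ) → (Fin (2*n) → ℝ) → (Fin (2*n) → ℝ) → ℝ)
    (hρ : ∀ X Y Z, ρ X Y Z = c * (Omega n X Y * u Z + Omega n X Z * u Y)) :
    epartOf n (ρ X) Y Z T S + epartOf n (ρ Y) Z X T S + epartOf n (ρ Z) X Y T S = 0 := by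
  simp only [epartOf, hρ]
  rw [Omega_antisymm Y X, Omega_antisymm Z X, Omega_antisymm Z Y]
  ring

end Symplectic

theorem weyl_cyclic_identity_general (n : ℕ)
    (Γ : (Fin (2*n) → ℝ) → (Fin (2*n) → ℝ) →L[ℝ] (Fin (2*n) → ℝ) →L[ℝ] (Fin (2*n) → ℝ))
    (hΓ : ContDiff ℝ (⊤ : ℕ∞) Γ)
    (hsym₁ : ∀ x X Y Z, Omega n (Γ x X Y) Z = Omega n (Γ x Y X) Z)
    (hsym₂ : ∀ x X Y Z, Omega n (Γ x X Y) Z = Omega n (Γ x X Z) Y)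
    (u : (Fin (2*n) → ℝ) → ((Fin (2*n) → ℝ) →L[ℝ] ℝ))
    (hur : ∀ x X Y Z, nablaRicci n Γ x X Y Z =
      (1/(2*(n:ℝ)+1)) * (Omega n X Y * u x Z + Omega n X Z * u x Y)) :
    ∀ x X Y Z T S,
      nablaW n Γ x X Y Z T S + nablaW n Γ x Y Z X T S + nablaW n Γ x Z X Y T S = 0 := by
  intro x X Y Z T S
  have hΓ₂ : ContDiff ℝ 2 Γ := hΓ.of_le (WithTop.coe_le_coe.mpr le_top)
  have hR : Omega n (nablaCurvature Γ x X Y Z T) S + Omega n (nablaCurvature Γ x Y Z X T) S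
      + Omega n (nablaCurvature Γ x Z X Y T) S = 0 := by
    rw [← Omega_add_left, ← Omega_add_left,
      nablaCurvature_cyclic x X Y Z T hΓ₂ (Gamma_comm_of_Omega · · · hsym₁), Omega_zero_left]
  have hE := epartOf_cyclic_eq_zero X Y Z T S _ (u x) _ (hur x)
  rw [nablaW_eq x X Y Z T S hΓ₂ hsym₂, nablaW_eq x Y Z X T S hΓ₂ hsym₂,
    nablaW_eq x Z X Y T S hΓ₂ hsym₂]
  linear_combination hR - hE

/-- If a symplectic connection `∇ = ∇⁰ + Γ` on `(ℝ^{2n},Ω)`, `n ≥ 2`,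
admits a smooth 1-form `u` with `(∇_X r)(x)(Y,Z) = (1/(2n+1))·(Ω(X,Y)u(x)(Z) + Ω(X,Z)u(x)(Y))`,
then the 'Weyl' part `W = R − E` satisfies the cyclic identity
`(∇_X W)(Y,Z;T,S) + (∇_Y W)(Z,X;T,S) + (∇_Z W)(X,Y;T,S) = 0`. -/
theorem weyl_cyclic_identity (n : ℕ) (hn : 2 ≤ n)
    (Γ : (Fin (2*n) → ℝ) → (Fin (2*n) → ℝ) →L[ℝ] (Fin (2*n) → ℝ) →L[ℝ] (Fin (2*n) → ℝ))
    (hΓ : ContDiff ℝ (⊤ : ℕ∞) Γ)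
    (hsym₁ : ∀ x X Y Z, Omega n (Γ x X Y) Z = Omega n (Γ x Y X) Z)
    (hsym₂ : ∀ x X Y Z, Omega n (Γ x X Y) Z = Omega n (Γ x X Z) Y)
    (u : (Fin (2*n) → ℝ) → ((Fin (2*n) → ℝ) →L[ℝ] ℝ))
    (hu : ContDiff ℝ (⊤ : ℕ∞) u)
    (hur : ∀ x X Y Z, nablaRicci n Γ x X Y Z =
      (1/(2*(n:ℝ)+1)) * (Omega n X Y * u x Z + Omega n X Z * u x Y)) :
    ∀ x X Y Z T S,
      nablaW n Γ x X Y Z T S + nablaW n Γ x Y Z X T S + nablaW n Γ x Z X Y T S = 0 :=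
  weyl_cyclic_identity_general n Γ hΓ hsym₁ hsym₂ u hur
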